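/- Let T' be a finite tree containing a vertex v that has two distinct neighbors a and b each of degree 1 in T', and let T be the tree obtained from T' by adding three new vertices u₁, u₂, u₃ with edges u₁u₂, u₂u₃, and vu₁. Then γ₂(T) = γ₂(T') + 2 and α₂(T) = α₂(T') + 2; in particular α₂(T) − γ₂(T) = α₂(T') − γ₂(T'). -/

import Mathlib

open SimpleGraph

/-- `S` is a `k`-dominating set of the subgraph of `G` induced by `U`:
`S ⊆ U` and every vertex of `U` not in `S` has at least `k` neighbors in `S`. -/
def IsKDomOn {V : Type*} (G : SimpleGraph V) (k : ℕ) (U S : Set V) : Prop :=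
  S ⊆ U ∧ ∀ v ∈ U, v ∉ S → k ≤ (G.neighborSet v ∩ S).ncard

/-- `S` is a `k`-independent set of the subgraph of `G` induced by `U`:
`S ⊆ U` and every vertex of `S` has at most `k - 1` neighbors in `S`. -/
def IsKIndOn {V : Type*} (G : SimpleGraph V) (k : ℕ) (U S : Set V) : Prop :=
  S ⊆ U ∧ ∀ v ∈ S, (G.neighborSet v ∩ S).ncard ≤ k - 1

/-- The `k`-domination number of the subgraph of `G` induced by `U`. -/
noncomputable def gammaK {V : Type*} (G : SimpleGraph V) (k : ℕ) (U : Set V) : ℕ :=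
  sInf {n | ∃ S, IsKDomOn G k U S ∧ S.ncard = n}

/-- The `k`-independence number of the subgraph of `G` induced by `U`. -/
noncomputable def alphaK {V : Type*} (G : SimpleGraph V) (k : ℕ) (U : Set V) : ℕ :=
  sSup {n | ∃ S, IsKIndOn G k U S ∧ S.ncard = n}

/-!
A minimum 2-dominating set of `T'` together with `u₁, u₃` 2-dominates `T`. Conversely, a
2-dominating set of `T` contains every vertex of degree at most one, hence `a`, `b`, `u₃`, and
also `u₁` or `u₂` (else `u₂` is dominated only once); its trace on `T'` is 2-dominating, since `v`
is dominated by `a` and `b` and every other vertex of `T'` keeps its neighbourhood.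

Likewise a maximum 2-independent set of `T'` together with `u₂, u₃` is 2-independent in `T`, while
a 2-independent set of `T` contains at most two of `u₁, u₂, u₃` and its trace on `T'` stays
2-independent.
-/

open Set Sum

section Numbers

variable {V : Type*} (G : SimpleGraph V) (k : ℕ) (U : Set V)

theorem exists_isKDomOn_ncard_eq_gammaK : ∃ S, IsKDomOn G k U S ∧ S.ncard = gammaK G k U :=
  Nat.sInf_mem (s := {n | ∃ S, IsKDomOn G k U S ∧ S.ncard = n})
    ⟨U.ncard, U, ⟨subset_rfl, fun _ hv hv' => absurd hv hv'⟩, rfl⟩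

variable {G k U}

theorem gammaK_le_ncard {S : Set V} (h : IsKDomOn G k U S) : gammaK G k U ≤ S.ncard :=
  Nat.sInf_le ⟨S, h, rfl⟩

variable [Finite V]

theorem bddAbove_ncard_isKIndOn : BddAbove {n | ∃ S, IsKIndOn G k U S ∧ S.ncard = n} :=
  ⟨Nat.card V, by
    rintro _ ⟨S, _, rfl⟩
    exact (ncard_le_ncard (subset_univ S)).trans_eq (ncard_univ V)⟩

variable (G k U) in
theorem exists_isKIndOn_ncard_eq_alphaK : ∃ S, IsKIndOn G k U S ∧ S.ncard = alphaK G k U :=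
  Nat.sSup_mem (s := {n | ∃ S, IsKIndOn G k U S ∧ S.ncard = n})
    ⟨0, ∅, ⟨empty_subset U, fun _ hv => absurd hv (notMem_empty _)⟩, ncard_empty _⟩
    bddAbove_ncard_isKIndOn

theorem ncard_le_alphaK {S : Set V} (h : IsKIndOn G k U S) : S.ncard ≤ alphaK G k U :=
  le_csSup bddAbove_ncard_isKIndOn ⟨S, h, rfl⟩

theorem IsKDomOn.mem_of_ncard_neighborSet_lt {S : Set V} (h : IsKDomOn G k U S) {x : V}
    (hx : x ∈ U) (hdeg : (G.neighborSet x).ncard < k) : x ∈ S := by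
  by_contra hxS
  have := h.2 x hx hxS
  have := ncard_le_ncard (inter_subset_left (s := G.neighborSet x) (t := S))
  omega

end Numbers

theorem Set.ncard_eq_ncard_preimage_inl_add_ncard_preimage_inr {α β : Type*} [Finite α]
    [Finite β] (S : Set (α ⊕ β)) : S.ncard = (inl ⁻¹' S).ncard + (inr ⁻¹' S).ncard := by
  have hS : S = inl '' (inl ⁻¹' S) ∪ inr '' (inr ⁻¹' S) := by
    ext w; cases w <;> simp
  have hdisj : Disjoint (inl '' (inl ⁻¹' S)) (inr '' (inr ⁻¹' S)) :=
    disjoint_left.mpr (by rintro _ ⟨x, _, rfl⟩ ⟨y, _, h⟩; exact inr_ne_inl h)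
  conv_lhs => rw [hS]
  rw [ncard_union_eq hdisj, ncard_image_of_injective _ inl_injective,
    ncard_image_of_injective _ inr_injective]

section Embedding

variable {V W : Type*} {G : SimpleGraph V} {H : SimpleGraph W} (f : G ↪g H)

theorem SimpleGraph.Embedding.image_neighborSet_inter_preimage (x : V) (S : Set W) :
    f '' (G.neighborSet x ∩ f ⁻¹' S) = H.neighborSet (f x) ∩ S ∩ range f := by
  ext w
  constructor
  · rintro ⟨y, ⟨hy, hyS⟩, rfl⟩
    exact ⟨⟨f.map_adj_iff.2 hy, hyS⟩, y, rfl⟩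
  · rintro ⟨⟨hw, hwS⟩, y, rfl⟩
    exact ⟨y, ⟨f.map_adj_iff.1 hw, hwS⟩, rfl⟩

theorem SimpleGraph.Embedding.ncard_neighborSet_inter_preimage_eq {x : V} {S : Set W}
    (hx : H.neighborSet (f x) ∩ S ⊆ range f) :
    (G.neighborSet x ∩ f ⁻¹' S).ncard = (H.neighborSet (f x) ∩ S).ncard := by
  rw [← ncard_image_of_injective _ f.injective, f.image_neighborSet_inter_preimage,
    inter_eq_left.2 hx]

variable [Finite W]

theorem SimpleGraph.Embedding.ncard_neighborSet_inter_preimage_le (x : V) (S : Set W) :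
    (G.neighborSet x ∩ f ⁻¹' S).ncard ≤ (H.neighborSet (f x) ∩ S).ncard := by
  rw [← ncard_image_of_injective _ f.injective, f.image_neighborSet_inter_preimage]
  exact ncard_le_ncard inter_subset_left

theorem IsKIndOn.preimage_embedding {k : ℕ} {U S : Set W} (h : IsKIndOn H k U S) :
    IsKIndOn G k (f ⁻¹' U) (f ⁻¹' S) :=
  ⟨preimage_mono h.1, fun x hx =>
    (f.ncard_neighborSet_inter_preimage_le x S).trans (h.2 (f x) hx)⟩

end Embedding

/-- `H` is `G` with the path `inr 0 - inr 1 - inr 2` (the paper's `u₁u₂u₃`) attached by the edge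
`v - inr 0`. -/
def IsPendantPathExtension {V : Type*} (G : SimpleGraph V) (v : V)
    (H : SimpleGraph (V ⊕ Fin 3)) : Prop :=
  ∀ p q, H.Adj p q ↔
    ((∃ x y, G.Adj x y ∧ p = inl x ∧ q = inl y) ∨
     (p = inr 0 ∧ q = inr 1) ∨ (p = inr 1 ∧ q = inr 0) ∨
     (p = inr 1 ∧ q = inr 2) ∨ (p = inr 2 ∧ q = inr 1) ∨
     (p = inl v ∧ q = inr 0) ∨ (p = inr 0 ∧ q = inl v))

namespace IsPendantPathExtension

variable {V : Type*} {G : SimpleGraph V} {v : V} {H : SimpleGraph (V ⊕ Fin 3)}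

theorem adj_inl_inl (h : IsPendantPathExtension G v H) {x y : V} :
    H.Adj (inl x) (inl y) ↔ G.Adj x y := by
  rw [h]; simp

theorem adj_inl_inr (h : IsPendantPathExtension G v H) {x : V} {i : Fin 3} :
    H.Adj (inl x) (inr i) ↔ x = v ∧ i = 0 := by
  rw [h]; simp [eq_comm]

theorem neighborSet_inr_one (h : IsPendantPathExtension G v H) :
    H.neighborSet (inr 1) = {inr 0, inr 2} := by
  ext w; rw [mem_neighborSet, h]; cases w <;> simp

theorem neighborSet_inr_two (h : IsPendantPathExtension G v H) :
    H.neighborSet (inr 2) = {inr 1} := by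
  ext w; rw [mem_neighborSet, h]; cases w <;> simp

def inlEmbedding (h : IsPendantPathExtension G v H) : G ↪g H :=
  ⟨Function.Embedding.inl, h.adj_inl_inl⟩

@[simp]
theorem coe_inlEmbedding (h : IsPendantPathExtension G v H) : ⇑h.inlEmbedding = inl :=
  rfl

theorem neighborSet_inl_subset_range (h : IsPendantPathExtension G v H) {x : V} (hx : x ≠ v) :
    H.neighborSet (inl x) ⊆ range inl := by
  rintro (y | i) hy
  · exact ⟨y, rfl⟩
  · exact absurd (h.adj_inl_inr.1 hy).1 hx

theorem ncard_neighborSet_inl (h : IsPendantPathExtension G v H) {x : V} (hx : x ≠ v) :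
    (H.neighborSet (inl x)).ncard = (G.neighborSet x).ncard := by
  simpa using (h.inlEmbedding.ncard_neighborSet_inter_preimage_eq
    (S := univ) (inter_subset_left.trans (h.neighborSet_inl_subset_range hx))).symm

theorem gammaK_le_add_two [Finite V] (h : IsPendantPathExtension G v H) :
    gammaK H 2 univ ≤ gammaK G 2 univ + 2 := by
  obtain ⟨S, hS, hcard⟩ := exists_isKDomOn_ncard_eq_gammaK G 2 univ
  set D : Set (V ⊕ Fin 3) := inl '' S ∪ {inr 0, inr 2}
  have hpre : inl ⁻¹' D = S := by ext; simp [D]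
  have hpre' : inr ⁻¹' D = {0, 2} := by ext; simp [D]
  have hD : IsKDomOn H 2 univ D := by
    refine ⟨subset_univ D, ?_⟩
    rintro (x | i) - hx
    · calc 2 ≤ (G.neighborSet x ∩ S).ncard := hS.2 x (mem_univ x) (by simpa [D] using hx)
        _ ≤ (H.neighborSet (inl x) ∩ D).ncard := by
          simpa [hpre] using h.inlEmbedding.ncard_neighborSet_inter_preimage_le x D
    · obtain rfl | rfl | rfl : i = 0 ∨ i = 1 ∨ i = 2 := by fin_cases i <;> simp
      · simp [D] at hx
      · rw [h.neighborSet_inr_one, inter_eq_left.2 (by simp [D, insert_subset_iff]),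
          ncard_pair (by simp)]
      · simp [D] at hx
  calc gammaK H 2 univ ≤ D.ncard := gammaK_le_ncard hD
    _ = gammaK G 2 univ + 2 := by
      rw [ncard_eq_ncard_preimage_inl_add_ncard_preimage_inr, hpre, hpre', hcard,
        ncard_pair (by decide)]

theorem two_le_ncard_preimage_inr [Finite V] (h : IsPendantPathExtension G v H)
    {S : Set (V ⊕ Fin 3)} (hS : IsKDomOn H 2 univ S) : 2 ≤ (inr ⁻¹' S).ncard := by
  have h2 : inr 2 ∈ S :=
    hS.mem_of_ncard_neighborSet_lt (mem_univ _) (by simp [h.neighborSet_inr_two])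
  have h01 : inr 0 ∈ S ∨ inr 1 ∈ S := by
    by_contra! h01
    have h1 := hS.2 (inr 1) (mem_univ _) h01.2
    rw [h.neighborSet_inr_one, insert_inter_of_notMem h01.1] at h1
    have := ncard_singleton_inter (inr 2) S
    omega
  rcases h01 with h0 | h1
  · exact (ncard_pair (by decide)).symm.trans_le (ncard_le_ncard (pair_subset (a := 0) h0 h2))
  · exact (ncard_pair (by decide)).symm.trans_le (ncard_le_ncard (pair_subset (a := 1) h1 h2))

theorem isKDomOn_preimage_inl [Finite V] (h : IsPendantPathExtension G v H) {a b : V}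
    (hab : a ≠ b) (hva : G.Adj v a) (hvb : G.Adj v b) {S : Set (V ⊕ Fin 3)}
    (hS : IsKDomOn H 2 univ S) (ha : inl a ∈ S) (hb : inl b ∈ S) :
    IsKDomOn G 2 univ (inl ⁻¹' S) := by
  refine ⟨subset_univ _, fun x _ hx => ?_⟩
  by_cases hxv : x = v
  · subst hxv
    rw [← ncard_pair hab]
    exact ncard_le_ncard (pair_subset ⟨hva, ha⟩ ⟨hvb, hb⟩)
  · rw [← coe_inlEmbedding h, h.inlEmbedding.ncard_neighborSet_inter_preimage_eq
      (inter_subset_left.trans (h.neighborSet_inl_subset_range hxv))]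
    exact hS.2 (inl x) (mem_univ _) hx

theorem add_two_le_gammaK [Finite V] (h : IsPendantPathExtension G v H) {a b : V} (hab : a ≠ b)
    (hva : G.Adj v a) (hvb : G.Adj v b) (hda : (G.neighborSet a).ncard = 1)
    (hdb : (G.neighborSet b).ncard = 1) : gammaK G 2 univ + 2 ≤ gammaK H 2 univ := by
  obtain ⟨S, hS, hcard⟩ := exists_isKDomOn_ncard_eq_gammaK H 2 univ
  have ha : inl a ∈ S := hS.mem_of_ncard_neighborSet_lt (mem_univ _) (by
    rw [h.ncard_neighborSet_inl hva.ne', hda]; norm_num)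
  have hb : inl b ∈ S := hS.mem_of_ncard_neighborSet_lt (mem_univ _) (by
    rw [h.ncard_neighborSet_inl hvb.ne', hdb]; norm_num)
  have hG := gammaK_le_ncard (h.isKDomOn_preimage_inl hab hva hvb hS ha hb)
  have hr := h.two_le_ncard_preimage_inr hS
  have hsplit := ncard_eq_ncard_preimage_inl_add_ncard_preimage_inr S
  omega

theorem gammaK_eq_add_two [Finite V] (h : IsPendantPathExtension G v H) {a b : V} (hab : a ≠ b)
    (hva : G.Adj v a) (hvb : G.Adj v b) (hda : (G.neighborSet a).ncard = 1)
    (hdb : (G.neighborSet b).ncard = 1) : gammaK H 2 univ = gammaK G 2 univ + 2 :=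
  h.gammaK_le_add_two.antisymm (h.add_two_le_gammaK hab hva hvb hda hdb)

theorem add_two_le_alphaK [Finite V] (h : IsPendantPathExtension G v H) :
    alphaK G 2 univ + 2 ≤ alphaK H 2 univ := by
  obtain ⟨I, hI, hcard⟩ := exists_isKIndOn_ncard_eq_alphaK G 2 univ
  set J : Set (V ⊕ Fin 3) := inl '' I ∪ {inr 1, inr 2}
  have hpre : inl ⁻¹' J = I := by ext; simp [J]
  have hpre' : inr ⁻¹' J = {1, 2} := by ext; simp [J]
  have h0 : inr 0 ∉ J := by simp [J]
  have hJ : IsKIndOn H 2 univ J := by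
    refine ⟨subset_univ J, ?_⟩
    rintro (x | i) hx
    · have hrange : H.neighborSet (inl x) ∩ J ⊆ range inl := by
        rintro (y | j) ⟨hy, hyJ⟩
        · exact ⟨y, rfl⟩
        · obtain ⟨-, rfl⟩ := h.adj_inl_inr.1 hy
          exact absurd hyJ h0
      rw [← coe_inlEmbedding h, ← h.inlEmbedding.ncard_neighborSet_inter_preimage_eq hrange,
        coe_inlEmbedding, hpre]
      exact hI.2 x (by simpa [J] using hx)
    · obtain rfl | rfl | rfl : i = 0 ∨ i = 1 ∨ i = 2 := by fin_cases i <;> simp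
      · exact absurd hx h0
      · rw [h.neighborSet_inr_one, insert_inter_of_notMem h0]
        exact ncard_singleton_inter _ _
      · rw [h.neighborSet_inr_two]
        exact ncard_singleton_inter _ _
  calc alphaK G 2 univ + 2 = J.ncard := by
        rw [ncard_eq_ncard_preimage_inl_add_ncard_preimage_inr, hpre, hpre', hcard,
          ncard_pair (by decide)]
    _ ≤ alphaK H 2 univ := ncard_le_alphaK hJ

theorem ncard_preimage_inr_le_two (h : IsPendantPathExtension G v H) {I : Set (V ⊕ Fin 3)}
    (hI : IsKIndOn H 2 univ I) : (inr ⁻¹' I).ncard ≤ 2 := by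
  have hne : inr ⁻¹' I ≠ univ := by
    intro hall
    have hmem : ∀ i, inr i ∈ I := fun i => (hall ▸ mem_univ i : i ∈ inr ⁻¹' I)
    have h1 := hI.2 (inr 1) (hmem 1)
    rw [h.neighborSet_inr_one, inter_eq_left.2 (pair_subset (hmem 0) (hmem 2)),
      ncard_pair (by simp)] at h1
    omega
  have := ncard_lt_ncard (ssubset_univ_iff.2 hne)
  rw [ncard_univ, Nat.card_eq_fintype_card, Fintype.card_fin] at this
  omega

theorem alphaK_le_add_two [Finite V] (h : IsPendantPathExtension G v H) :
    alphaK H 2 univ ≤ alphaK G 2 univ + 2 := by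
  obtain ⟨I, hI, hcard⟩ := exists_isKIndOn_ncard_eq_alphaK H 2 univ
  have hG := ncard_le_alphaK (hI.preimage_embedding h.inlEmbedding)
  rw [preimage_univ, coe_inlEmbedding] at hG
  have hr := h.ncard_preimage_inr_le_two hI
  have hsplit := ncard_eq_ncard_preimage_inl_add_ncard_preimage_inr I
  omega

theorem alphaK_eq_add_two [Finite V] (h : IsPendantPathExtension G v H) :
    alphaK H 2 univ = alphaK G 2 univ + 2 :=
  h.alphaK_le_add_two.antisymm h.add_two_le_alphaK

end IsPendantPathExtension

theorem stmt11_general {V : Type*} [Fintype V] (T' : SimpleGraph V)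
    (v a b : V) (hab : a ≠ b) (hva : T'.Adj v a) (hvb : T'.Adj v b)
    (hda : (T'.neighborSet a).ncard = 1) (hdb : (T'.neighborSet b).ncard = 1)
    (T : SimpleGraph (V ⊕ Fin 3))
    (hadj : ∀ a b, T.Adj a b ↔
      ((∃ x y, T'.Adj x y ∧ a = Sum.inl x ∧ b = Sum.inl y) ∨
       (a = (Sum.inr 0 : V ⊕ Fin 3) ∧ b = Sum.inr 1) ∨ (a = Sum.inr 1 ∧ b = (Sum.inr 0 : V ⊕ Fin 3)) ∨
       (a = (Sum.inr 1 : V ⊕ Fin 3) ∧ b = Sum.inr 2) ∨ (a = Sum.inr 2 ∧ b = (Sum.inr 1 : V ⊕ Fin 3)) ∨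
       (a = Sum.inl v ∧ b = (Sum.inr 0 : V ⊕ Fin 3)) ∨ (a = (Sum.inr 0 : V ⊕ Fin 3) ∧ b = Sum.inl v))) :
    gammaK T 2 Set.univ = gammaK T' 2 Set.univ + 2 ∧
    alphaK T 2 Set.univ = alphaK T' 2 Set.univ + 2 ∧
    (alphaK T 2 Set.univ : ℤ) - (gammaK T 2 Set.univ : ℤ) =
      (alphaK T' 2 Set.univ : ℤ) - (gammaK T' 2 Set.univ : ℤ) := by
  have hext : IsPendantPathExtension T' v T := hadj
  have hγ := hext.gammaK_eq_add_two hab hva hvb hda hdb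
  have hα := hext.alphaK_eq_add_two
  refine ⟨hγ, hα, ?_⟩
  rw [hγ, hα]
  push_cast
  ring

theorem stmt11 {V : Type*} [Fintype V] (T' : SimpleGraph V) (hT' : T'.IsTree)
    (v a b : V) (hab : a ≠ b) (hva : T'.Adj v a) (hvb : T'.Adj v b)
    (hda : (T'.neighborSet a).ncard = 1) (hdb : (T'.neighborSet b).ncard = 1)
    (T : SimpleGraph (V ⊕ Fin 3))
    (hadj : ∀ a b, T.Adj a b ↔
      ((∃ x y, T'.Adj x y ∧ a = Sum.inl x ∧ b = Sum.inl y) ∨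
       (a = (Sum.inr 0 : V ⊕ Fin 3) ∧ b = Sum.inr 1) ∨ (a = Sum.inr 1 ∧ b = (Sum.inr 0 : V ⊕ Fin 3)) ∨
       (a = (Sum.inr 1 : V ⊕ Fin 3) ∧ b = Sum.inr 2) ∨ (a = Sum.inr 2 ∧ b = (Sum.inr 1 : V ⊕ Fin 3)) ∨
       (a = Sum.inl v ∧ b = (Sum.inr 0 : V ⊕ Fin 3)) ∨ (a = (Sum.inr 0 : V ⊕ Fin 3) ∧ b = Sum.inl v))) :
    gammaK T 2 Set.univ = gammaK T' 2 Set.univ + 2 ∧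
    alphaK T 2 Set.univ = alphaK T' 2 Set.univ + 2 ∧
    (alphaK T 2 Set.univ : ℤ) - (gammaK T 2 Set.univ : ℤ) =
      (alphaK T' 2 Set.univ : ℤ) - (gammaK T' 2 Set.univ : ℤ) :=
  stmt11_general T' v a b hab hva hvb hda hdb T hadj
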